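/- arXiv:2605.13277 — 3 statements merged into one kernel-verified Lean document; each statement's English description precedes it below -/
import Mathlib

section
/- Let P₀, P₁ be probability distributions on a finite set, P_λ = (1−λ)P₀ + λP₁, and fix λ̄ ∈ [0,1] with P_{λ̄} strictly positive. Then g(λ) = D_KL(P_λ ‖ P_{λ̄}) satisfies g(λ̄) = 0 and g is nondecreasing on [λ̄, 1]. -/
/-!
Each summand `λ ↦ P_λ(y) log (P_λ(y) / P_λ̄(y))` is `x ↦ x log (x / c)` composed with an affine
map, so `g` is convex wherever `P_λ ≥ 0`, in particular on `[λ̄, 1]`, where `P_λ` is a mixture of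
`P_λ̄` and `P₁`. By Gibbs' inequality `g ≥ 0 = g(λ̄)` there, and a convex function on an interval
is nondecreasing once it is minimised at the left endpoint.
-/

open Real Finset InformationTheory

theorem ConvexOn.sum {𝕜 E β ι : Type*} [Semiring 𝕜] [PartialOrder 𝕜] [AddCommMonoid E]
    [AddCommMonoid β] [PartialOrder β] [IsOrderedAddMonoid β] [SMul 𝕜 E] [Module 𝕜 β]
    {s : Set E} (hs : Convex 𝕜 s) (t : Finset ι) {f : ι → E → β}
    (hf : ∀ i ∈ t, ConvexOn 𝕜 s (f i)) : ConvexOn 𝕜 s fun x => ∑ i ∈ t, f i x := by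
  classical
  induction t using Finset.induction_on with
  | empty => simpa using convexOn_const (0 : β) hs
  | insert i t hi ih =>
    simp only [Finset.sum_insert hi]
    exact (hf i (mem_insert_self i t)).add (ih fun j hj => hf j (mem_insert_of_mem hj))

theorem ConvexOn.monotoneOn_of_isMinOn_left {𝕜 β : Type*} [Field 𝕜] [LinearOrder 𝕜]
    [IsStrictOrderedRing 𝕜] [AddCommMonoid β] [LinearOrder β] [IsOrderedCancelAddMonoid β]
    [Module 𝕜 β] [PosSMulStrictMono 𝕜 β] {f : 𝕜 → β} {a b : 𝕜}
    (hf : ConvexOn 𝕜 (Set.Icc a b) f) (hmin : IsMinOn f (Set.Icc a b) a) :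
    MonotoneOn f (Set.Icc a b) := by
  intro x hx y hy hxy
  rcases hx.1.eq_or_lt with rfl | hax
  · exact hmin hy
  · exact hf.le_right_of_left_le'' (Set.left_mem_Icc.2 (hx.1.trans hx.2)) hy hax hxy (hmin hx)

lemma convexOn_mul_log_div {c : ℝ} (hc : c ≠ 0) :
    ConvexOn ℝ (Set.Ici 0) fun x => x * log (x / c) := by
  refine (convexOn_mul_log.sub ((LinearMap.mulLeft ℝ (log c)).concaveOn (convex_Ici 0))).congr
    fun x _ => ?_
  rcases eq_or_ne x 0 with rfl | hx
  · simp
  · simp [log_div hx hc]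
    ring

lemma sub_le_mul_log_div {p q : ℝ} (hp : 0 ≤ p) (hq : 0 < q) : p - q ≤ p * log (p / q) := by
  have := mul_nonneg hq.le (klFun_nonneg (div_nonneg hp hq.le))
  rw [klFun_apply, mul_sub, mul_add, ← mul_assoc, mul_div_cancel₀ p hq.ne'] at this
  linarith

lemma sum_mul_log_div_nonneg {ι : Type*} (s : Finset ι) {p q : ι → ℝ} (hp : ∀ i ∈ s, 0 ≤ p i)
    (hq : ∀ i ∈ s, 0 < q i) (hpq : ∑ i ∈ s, p i = ∑ i ∈ s, q i) :
    0 ≤ ∑ i ∈ s, p i * log (p i / q i) :=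
  calc 0 = ∑ i ∈ s, (p i - q i) := by rw [sum_sub_distrib, hpq, sub_self]
    _ ≤ ∑ i ∈ s, p i * log (p i / q i) :=
      sum_le_sum fun i hi => sub_le_mul_log_div (hp i hi) (hq i hi)

lemma one_sub_mul_add_mul_nonneg_of_mem_Icc {a b lbar l : ℝ}
    (hbar : 0 ≤ (1 - lbar) * a + lbar * b) (hb : 0 ≤ b) (hl : l ∈ Set.Icc lbar 1) :
    0 ≤ (1 - l) * a + l * b := by
  rcases hl.2.eq_or_lt with rfl | hl1
  · simpa using hb
  · have key : (1 - lbar) * ((1 - l) * a + l * b)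
        = (1 - l) * ((1 - lbar) * a + lbar * b) + (l - lbar) * b := by ring
    have : 0 ≤ (1 - lbar) * ((1 - l) * a + l * b) := by
      rw [key]
      exact add_nonneg (mul_nonneg (by linarith) hbar) (mul_nonneg (by linarith [hl.1]) hb)
    exact (mul_nonneg_iff_of_pos_left (by linarith [hl.1])).1 this

lemma sum_mixture {Y : Type*} [Fintype Y] {P0 P1 : Y → ℝ} (hP0 : ∑ y, P0 y = 1)
    (hP1 : ∑ y, P1 y = 1) (l : ℝ) :
    ∑ y, ((1 - l) * P0 y + l * P1 y) = 1 := by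
  rw [sum_add_distrib, ← mul_sum, ← mul_sum, hP0, hP1]
  ring

section Mixture

variable {Y : Type*} [Fintype Y] (P0 P1 : Y → ℝ)

noncomputable def mixtureKL (q : Y → ℝ) (l : ℝ) : ℝ :=
  ∑ y, ((1 - l) * P0 y + l * P1 y) * log (((1 - l) * P0 y + l * P1 y) / q y)

lemma mixtureKL_self (l : ℝ) : mixtureKL P0 P1 (fun y => (1 - l) * P0 y + l * P1 y) l = 0 :=
  sum_eq_zero fun y _ => by
    rcases eq_or_ne ((1 - l) * P0 y + l * P1 y) 0 with h | h
    · rw [h, zero_mul]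
    · rw [div_self h, log_one, mul_zero]

lemma convexOn_mixtureKL {q : Y → ℝ} (hq : ∀ y, q y ≠ 0) {s : Set ℝ} (hs : Convex ℝ s)
    (hnonneg : ∀ l ∈ s, ∀ y, 0 ≤ (1 - l) * P0 y + l * P1 y) :
    ConvexOn ℝ s (mixtureKL P0 P1 q) := by
  refine ConvexOn.sum hs univ fun y _ => ?_
  refine (((convexOn_mul_log_div (hq y)).comp_affineMap
    (AffineMap.lineMap (P0 y) (P1 y))).subset (fun l hl => ?_) hs).congr fun l _ => ?_
  · simp only [Set.mem_preimage, AffineMap.lineMap_apply_module, smul_eq_mul, Set.mem_Ici]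
    exact hnonneg l hl y
  · simp [AffineMap.lineMap_apply_module]

end Mixture

theorem mixtureKL_zero_and_monotone_general {Y : Type*} [Fintype Y] (P0 P1 : Y → ℝ)
    (hP01 : ∑ y, P0 y = 1)
    (hP10 : ∀ y, 0 ≤ P1 y) (hP11 : ∑ y, P1 y = 1)
    (lbar : ℝ)
    (hpos : ∀ y, 0 < (1 - lbar) * P0 y + lbar * P1 y) :
    (∑ y, ((1 - lbar) * P0 y + lbar * P1 y) *
        Real.log (((1 - lbar) * P0 y + lbar * P1 y) / ((1 - lbar) * P0 y + lbar * P1 y))) = 0 ∧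
    MonotoneOn
      (fun l : ℝ => ∑ y, ((1 - l) * P0 y + l * P1 y) *
        Real.log (((1 - l) * P0 y + l * P1 y) / ((1 - lbar) * P0 y + lbar * P1 y)))
      (Set.Icc lbar 1) := by
  have hnonneg : ∀ l ∈ Set.Icc lbar 1, ∀ y, 0 ≤ (1 - l) * P0 y + l * P1 y := fun l hl y =>
    one_sub_mul_add_mul_nonneg_of_mem_Icc (hpos y).le (hP10 y) hl
  refine ⟨mixtureKL_self P0 P1 lbar, ?_⟩
  refine (convexOn_mixtureKL P0 P1 (fun y => (hpos y).ne') (convex_Icc lbar 1)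
    hnonneg).monotoneOn_of_isMinOn_left fun l hl => ?_
  show mixtureKL P0 P1 _ lbar ≤ mixtureKL P0 P1 _ l
  rw [mixtureKL_self]
  exact sum_mul_log_div_nonneg univ (fun y _ => hnonneg l hl y) (fun y _ => hpos y)
    (by rw [sum_mixture hP01 hP11, sum_mixture hP01 hP11])

/-- For pmfs `P₀, P₁` on a finite set, with mixtures `P_λ = (1-λ)P₀ + λP₁` and `λ̄ ∈ [0,1]`
such that `P_{λ̄}` is strictly positive, the map `g(λ) = D_KL(P_λ ‖ P_{λ̄})` satisfies
`g(λ̄) = 0` and `g` is nondecreasing on `[λ̄, 1]`. -/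
theorem mixtureKL_zero_and_monotone {Y : Type*} [Fintype Y] (P0 P1 : Y → ℝ)
    (hP00 : ∀ y, 0 ≤ P0 y) (hP01 : ∑ y, P0 y = 1)
    (hP10 : ∀ y, 0 ≤ P1 y) (hP11 : ∑ y, P1 y = 1)
    (lbar : ℝ) (hlbar : lbar ∈ Set.Icc (0:ℝ) 1)
    (hpos : ∀ y, 0 < (1 - lbar) * P0 y + lbar * P1 y) :
    (∑ y, ((1 - lbar) * P0 y + lbar * P1 y) *
        Real.log (((1 - lbar) * P0 y + lbar * P1 y) / ((1 - lbar) * P0 y + lbar * P1 y))) = 0 ∧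
    MonotoneOn
      (fun l : ℝ => ∑ y, ((1 - l) * P0 y + l * P1 y) *
        Real.log (((1 - l) * P0 y + l * P1 y) / ((1 - lbar) * P0 y + lbar * P1 y)))
      (Set.Icc lbar 1) :=
  mixtureKL_zero_and_monotone_general P0 P1 hP01 hP10 hP11 lbar hpos
end

section
/- Theorem (answer-space monotonicity under the mixture model): Let P₀, P₁ be probability distributions on a finite set with the mixture P_λ = (1−λ)P₀ + λP₁ strictly positive at λ̄ ∈ [0,1]. If λ₁, λ₂ ∈ [λ̄, 1] and λ₁ ≥ λ₂, then D_KL(P_{λ₁} ‖ P_{λ̄}) ≥ D_KL(P_{λ₂} ‖ P_{λ̄}). -/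
open Real Finset

/-- Pointwise Gibbs: `p - q ≤ p * log (p / q)` for `p ≥ 0`, `q > 0`. -/
lemma gibbs_pointwise {p q : ℝ} (hp : 0 ≤ p) (hq : 0 < q) :
    p - q ≤ p * Real.log (p / q) := by
  rcases eq_or_lt_of_le hp with h | h
  · simp [← h]; linarith
  · have hqp : 0 < q / p := by positivity
    have := Real.log_le_sub_one_of_pos hqp
    have hlog : Real.log (p / q) = - Real.log (q / p) := by
      rw [← Real.log_inv]; congr 1; field_simp
    rw [hlog]
    have : p * Real.log (q / p) ≤ p * (q / p - 1) :=
      mul_le_mul_of_nonneg_left this hp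
    have hpq : p * (q / p - 1) = q - p := by field_simp
    nlinarith

/-- Pointwise convexity of `x ↦ x * log (x / q)` on nonnegative reals. -/
lemma mul_log_div_convex {q x₀ x₁ a b : ℝ} (hq : 0 < q) (h0 : 0 ≤ x₀) (h1 : 0 ≤ x₁)
    (ha : 0 ≤ a) (hb : 0 ≤ b) (hab : a + b = 1) :
    (a * x₀ + b * x₁) * Real.log ((a * x₀ + b * x₁) / q)
      ≤ a * (x₀ * Real.log (x₀ / q)) + b * (x₁ * Real.log (x₁ / q)) := by
  have hu : x₀ / q ∈ Set.Ici (0:ℝ) := Set.mem_Ici.mpr (by positivity)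
  have hv : x₁ / q ∈ Set.Ici (0:ℝ) := Set.mem_Ici.mpr (by positivity)
  have key := convexOn_mul_log.2 hu hv ha hb hab
  simp only [smul_eq_mul] at key
  have hdiv : (a * x₀ + b * x₁) / q = a * (x₀ / q) + b * (x₁ / q) := by
    field_simp
  have := mul_le_mul_of_nonneg_left key hq.le
  calc (a * x₀ + b * x₁) * Real.log ((a * x₀ + b * x₁) / q)
      = q * ((a * (x₀ / q) + b * (x₁ / q)) * Real.log (a * (x₀ / q) + b * (x₁ / q))) := by
        rw [hdiv]; field_simp
    _ ≤ q * (a * (x₀ / q * Real.log (x₀ / q)) + b * (x₁ / q * Real.log (x₁ / q))) := this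
    _ = a * (x₀ * Real.log (x₀ / q)) + b * (x₁ * Real.log (x₁ / q)) := by
        field_simp

/-- Answer-space monotonicity under the mixture model: with `P_λ = (1-λ)P₀ + λP₁` and
`P_{λ̄}` strictly positive, if `λ̄ ≤ λ₂ ≤ λ₁ ≤ 1` then
`D_KL(P_{λ₁} ‖ P_{λ̄}) ≥ D_KL(P_{λ₂} ‖ P_{λ̄})`. -/
theorem answer_space_monotonicity {Y : Type*} [Fintype Y] (P0 P1 : Y → ℝ)
    (hP00 : ∀ y, 0 ≤ P0 y) (hP01 : ∑ y, P0 y = 1)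
    (hP10 : ∀ y, 0 ≤ P1 y) (hP11 : ∑ y, P1 y = 1)
    (lbar : ℝ) (hlbar : lbar ∈ Set.Icc (0:ℝ) 1)
    (hpos : ∀ y, 0 < (1 - lbar) * P0 y + lbar * P1 y)
    (l₁ l₂ : ℝ) (hl₁ : l₁ ∈ Set.Icc lbar 1) (hl₂ : l₂ ∈ Set.Icc lbar 1) (h : l₁ ≥ l₂) :
    ∑ y, ((1 - l₁) * P0 y + l₁ * P1 y) *
        Real.log (((1 - l₁) * P0 y + l₁ * P1 y) / ((1 - lbar) * P0 y + lbar * P1 y))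
      ≥ ∑ y, ((1 - l₂) * P0 y + l₂ * P1 y) *
        Real.log (((1 - l₂) * P0 y + l₂ * P1 y) / ((1 - lbar) * P0 y + lbar * P1 y)) := by
  obtain ⟨hlb0, hlb1⟩ := hlbar
  obtain ⟨h1l, h1u⟩ := hl₁
  obtain ⟨h2l, h2u⟩ := hl₂
  set q : Y → ℝ := fun y => (1 - lbar) * P0 y + lbar * P1 y with hq
  set p : ℝ → Y → ℝ := fun l y => (1 - l) * P0 y + l * P1 y with hp
  have hpnn : ∀ l ∈ Set.Icc (0:ℝ) 1, ∀ y, 0 ≤ p l y := fun l hl y =>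
    add_nonneg (mul_nonneg (by linarith [hl.2]) (hP00 y))
      (mul_nonneg hl.1 (hP10 y))
  have hl₁01 : l₁ ∈ Set.Icc (0:ℝ) 1 := ⟨le_trans hlb0 h1l, h1u⟩
  have hpsum : ∀ l : ℝ, ∑ y, p l y = 1 := by
    intro l
    simp only [hp, Finset.sum_add_distrib, ← Finset.mul_sum, hP01, hP11]
    ring
  -- F l₁ ≥ 0 (Gibbs)
  have hF1 : 0 ≤ ∑ y, p l₁ y * Real.log (p l₁ y / q y) := by
    have : ∑ y, (p l₁ y - q y) ≤ ∑ y, p l₁ y * Real.log (p l₁ y / q y) :=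
      Finset.sum_le_sum fun y _ => gibbs_pointwise (hpnn l₁ hl₁01 y) (hpos y)
    have hz : ∑ y, (p l₁ y - q y) = 0 := by
      rw [Finset.sum_sub_distrib, hpsum]
      have : ∑ y, q y = 1 := hpsum lbar
      rw [this]; ring
    linarith
  rcases eq_or_lt_of_le h1l with heq | hlt
  · -- l₁ = lbar, so l₂ = lbar too
    have h2 : l₂ = lbar := le_antisymm (heq ▸ h) h2l
    have h1 : l₁ = lbar := heq.symm
    rw [h1, h2]
  · -- lbar < l₁
    set b : ℝ := (l₂ - lbar) / (l₁ - lbar) with hbdef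
    set a : ℝ := 1 - b with hadef
    have hden : 0 < l₁ - lbar := by linarith
    have hb0 : 0 ≤ b := div_nonneg (by linarith) hden.le
    have hb1 : b ≤ 1 := by
      rw [div_le_one hden]; linarith
    have ha0 : 0 ≤ a := by linarith
    have hab : a + b = 1 := by ring
    have hl2comb : ∀ y, p l₂ y = a * q y + b * p l₁ y := by
      intro y
      simp only [hp, hq, hadef, hbdef]
      field_simp
      ring
    have hterm : ∀ y,
        p l₂ y * Real.log (p l₂ y / q y)
          ≤ a * (q y * Real.log (q y / q y)) + b * (p l₁ y * Real.log (p l₁ y / q y)) := by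
      intro y
      rw [hl2comb y]
      exact mul_log_div_convex (hpos y) (hpos y).le (hpnn l₁ hl₁01 y) ha0 hb0 hab
    have hsum : ∑ y, p l₂ y * Real.log (p l₂ y / q y)
        ≤ ∑ y, (a * (q y * Real.log (q y / q y)) + b * (p l₁ y * Real.log (p l₁ y / q y))) :=
      Finset.sum_le_sum fun y _ => hterm y
    have hqlog : ∀ y : Y, q y * Real.log (q y / q y) = 0 := by
      intro y
      rw [div_self (hpos y).ne']
      simp
    have hrhs : ∑ y, (a * (q y * Real.log (q y / q y)) + b * (p l₁ y * Real.log (p l₁ y / q y)))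
        = b * ∑ y, p l₁ y * Real.log (p l₁ y / q y) := by
      simp only [hqlog, mul_zero, zero_add, ← Finset.mul_sum]
    rw [hrhs] at hsum
    have : b * ∑ y, p l₁ y * Real.log (p l₁ y / q y)
        ≤ ∑ y, p l₁ y * Real.log (p l₁ y / q y) := by
      nlinarith
    exact le_trans hsum this
end

section
/- End-to-end selection theorem: Let Ĉ be a nonempty finite set, p : Ĉ → [p̄, 1) with p̄ ∈ (0,1), λ : Ĉ → [λ̄, 1] with λ̄ ∈ [0,1], and suppose p(c₁) ≥ p(c₂) implies λ(c₁) ≥ λ(c₂) for all c₁, c₂ ∈ Ĉ. Let P₀, P₁ be distributions on a finite set with P_{λ̄} strictly positive, and define U(c) = D_KL(P_{λ(c)} ‖ P_{λ̄}). Then any maximizer of D_KL(Bern(p(·)) ‖ Bern(p̄)) over Ĉ is also a maximizer of U over Ĉ. -/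
/-!
Along a segment `λ ↦ P_λ` of distributions, `λ ↦ D_KL(P_λ ‖ P_λ̄)` is convex (it is a sum of
`klFun` composed with affine maps), strictly so if `P₀ ≠ P₁`, and it vanishes, hence is minimal, at
`λ̄`. A convex function is nondecreasing to the right of a minimiser, strictly increasing if it is
strictly convex. `D_KL(Bern(q) ‖ Bern(p̄))` is the case of the segment between the two point masses
on `Bool`, so a maximiser `c⋆` of it has the largest `p`, hence by the monotone linkage the largest
`λ`, and therefore the largest `U`.
-/

/-- Bernoulli KL divergence `D_KL(Bern(q) ‖ Bern(p))`. -/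
noncomputable def bernKL (q p : ℝ) : ℝ :=
  q * Real.log (q / p) + (1 - q) * Real.log ((1 - q) / (1 - p))

open Real Set InformationTheory

section ConvexMonotone

variable {f : ℝ → ℝ} {s : Set ℝ} {x₀ : ℝ}

theorem ConvexOn.monotoneOn_of_isMinOn (hf : ConvexOn ℝ s f) (hx₀ : x₀ ∈ s)
    (hmin : IsMinOn f s x₀) : MonotoneOn f (s ∩ Ici x₀) := by
  intro x hx y hy hxy
  calc f x ≤ max (f x₀) (f y) :=
        hf.le_on_segment hx₀ hy.1 (segment_eq_Icc (hx.2.trans hxy) ▸ ⟨hx.2, hxy⟩)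
    _ = f y := max_eq_right (hmin hy.1)

theorem StrictConvexOn.strictMonoOn_of_isMinOn (hf : StrictConvexOn ℝ s f) (hx₀ : x₀ ∈ s)
    (hmin : IsMinOn f s x₀) : StrictMonoOn f (s ∩ Ici x₀) := by
  intro x hx y hy hxy
  rcases (mem_Ici.1 hx.2).eq_or_lt with rfl | hx₀x
  · exact (hmin hy.1).lt_of_ne fun h ↦ hxy.ne <|
      hf.eq_of_isMinOn hmin (fun z hz ↦ h ▸ hmin hz) hx₀ hy.1
  · calc f x < max (f x₀) (f y) :=
          hf.lt_on_openSegment hx₀ hy.1 (hx₀x.trans hxy).ne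
            (openSegment_eq_Ioo (hx₀x.trans hxy) ▸ ⟨hx₀x, hxy⟩)
      _ = f y := max_eq_right (hmin hy.1)

end ConvexMonotone

section Mixture

variable {Y : Type*} {P₀ P₁ Q : Y → ℝ}

noncomputable def discreteKL [Fintype Y] (P Q : Y → ℝ) : ℝ := ∑ y, P y * log (P y / Q y)

def mixture (P₀ P₁ : Y → ℝ) (l : ℝ) : Y → ℝ := fun y => (1 - l) * P₀ y + l * P₁ y

lemma mul_log_div_eq_mul_klFun {x c : ℝ} (hc : c ≠ 0) :
    x * log (x / c) = c * klFun (x / c) + x - c := by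
  rw [klFun_apply]; field_simp; ring

lemma discreteKL_eq_sum_klFun [Fintype Y] {P Q : Y → ℝ} (hQ : ∀ y, Q y ≠ 0)
    (hsum : ∑ y, P y = ∑ y, Q y) : discreteKL P Q = ∑ y, Q y * klFun (P y / Q y) := by
  simp only [discreteKL, mul_log_div_eq_mul_klFun (hQ _), Finset.sum_sub_distrib,
    Finset.sum_add_distrib, hsum]
  ring

namespace mixture

lemma sum_eq [Fintype Y] (hsum : ∑ y, P₀ y = ∑ y, P₁ y) (l : ℝ) :
    ∑ y, mixture P₀ P₁ l y = ∑ y, P₀ y := by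
  simp only [mixture, Finset.sum_add_distrib, ← Finset.mul_sum, ← hsum]; ring

lemma nonneg (hP₀ : ∀ y, 0 ≤ P₀ y) (hP₁ : ∀ y, 0 ≤ P₁ y) {l : ℝ} (hl : l ∈ Icc 0 1) (y : Y) :
    0 ≤ mixture P₀ P₁ l y :=
  add_nonneg (mul_nonneg (sub_nonneg.2 hl.2) (hP₀ y)) (mul_nonneg hl.1 (hP₁ y))

lemma combo {a b : ℝ} (hab : a + b = 1) (l₁ l₂ : ℝ) (y : Y) :
    mixture P₀ P₁ (a * l₁ + b * l₂) y = a * mixture P₀ P₁ l₁ y + b * mixture P₀ P₁ l₂ y := by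
  simp only [mixture]; linear_combination (-P₀ y) * hab

end mixture

lemma convexOn_mul_klFun_mixture (hP₀ : ∀ y, 0 ≤ P₀ y) (hP₁ : ∀ y, 0 ≤ P₁ y) {c : ℝ}
    (hc : 0 ≤ c) (y : Y) :
    ConvexOn ℝ (Icc 0 1) fun l => c * klFun (mixture P₀ P₁ l y / c) := by
  refine ⟨convex_Icc 0 1, fun l₁ hl₁ l₂ hl₂ a b ha hb hab => ?_⟩
  have hx : ∀ l ∈ Icc (0 : ℝ) 1, mixture P₀ P₁ l y / c ∈ Ici 0 :=
    fun l hl => div_nonneg (mixture.nonneg hP₀ hP₁ hl y) hc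
  have key := mul_le_mul_of_nonneg_left (convexOn_klFun.2 (hx l₁ hl₁) (hx l₂ hl₂) ha hb hab) hc
  simp only [smul_eq_mul] at key ⊢
  rw [mixture.combo hab, add_div, mul_div_assoc, mul_div_assoc]
  linarith

lemma strictConvexOn_mul_klFun_mixture (hP₀ : ∀ y, 0 ≤ P₀ y) (hP₁ : ∀ y, 0 ≤ P₁ y) {c : ℝ}
    (hc : 0 < c) {y : Y} (hy : P₀ y ≠ P₁ y) :
    StrictConvexOn ℝ (Icc 0 1) fun l => c * klFun (mixture P₀ P₁ l y / c) := by
  refine ⟨convex_Icc 0 1, fun l₁ hl₁ l₂ hl₂ hl a b ha hb hab => ?_⟩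
  have hx : ∀ l ∈ Icc (0 : ℝ) 1, mixture P₀ P₁ l y / c ∈ Ici 0 :=
    fun l hl => div_nonneg (mixture.nonneg hP₀ hP₁ hl y) hc.le
  have hne : mixture P₀ P₁ l₁ y / c ≠ mixture P₀ P₁ l₂ y / c := by
    rw [Ne, div_left_inj' hc.ne']
    intro h
    exact hl (mul_right_cancel₀ (sub_ne_zero.2 hy.symm) (by simp only [mixture] at h; linarith))
  have key := mul_lt_mul_of_pos_left
    (strictConvexOn_klFun.2 (hx l₁ hl₁) (hx l₂ hl₂) hne ha hb hab) hc
  simp only [smul_eq_mul] at key ⊢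
  rw [mixture.combo hab, add_div, mul_div_assoc, mul_div_assoc]
  linarith

variable [Fintype Y]

lemma convexOn_sum_mul_klFun_mixture (hP₀ : ∀ y, 0 ≤ P₀ y) (hP₁ : ∀ y, 0 ≤ P₁ y)
    (hQ : ∀ y, 0 ≤ Q y) :
    ConvexOn ℝ (Icc 0 1) fun l => ∑ y, Q y * klFun (mixture P₀ P₁ l y / Q y) := by
  refine ⟨convex_Icc 0 1, fun l₁ hl₁ l₂ hl₂ a b ha hb hab => ?_⟩
  simp only [smul_eq_mul, Finset.mul_sum, ← Finset.sum_add_distrib]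
  exact Finset.sum_le_sum fun y _ => by
    simpa only [smul_eq_mul] using
      (convexOn_mul_klFun_mixture hP₀ hP₁ (hQ y) y).2 hl₁ hl₂ ha hb hab

lemma strictConvexOn_sum_mul_klFun_mixture (hP₀ : ∀ y, 0 ≤ P₀ y) (hP₁ : ∀ y, 0 ≤ P₁ y)
    (hne : P₀ ≠ P₁) (hQ : ∀ y, 0 < Q y) :
    StrictConvexOn ℝ (Icc 0 1) fun l => ∑ y, Q y * klFun (mixture P₀ P₁ l y / Q y) := by
  refine ⟨convex_Icc 0 1, fun l₁ hl₁ l₂ hl₂ hl a b ha hb hab => ?_⟩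
  obtain ⟨y₀, hy₀⟩ := Function.ne_iff.1 hne
  simp only [smul_eq_mul, Finset.mul_sum, ← Finset.sum_add_distrib]
  refine Finset.sum_lt_sum (fun y _ => ?_) ⟨y₀, Finset.mem_univ _, ?_⟩
  · simpa only [smul_eq_mul] using
      (convexOn_mul_klFun_mixture hP₀ hP₁ (hQ y).le y).2 hl₁ hl₂ ha.le hb.le hab
  · simpa only [smul_eq_mul] using
      (strictConvexOn_mul_klFun_mixture hP₀ hP₁ (hQ y₀) hy₀).2 hl₁ hl₂ hl ha hb hab

variable {l₀ : ℝ}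

lemma discreteKL_mixture_eq_sum_klFun (hsum : ∑ y, P₀ y = ∑ y, P₁ y)
    (hpos : ∀ y, 0 < mixture P₀ P₁ l₀ y) :
    (fun l => discreteKL (mixture P₀ P₁ l) (mixture P₀ P₁ l₀)) =
      fun l => ∑ y, mixture P₀ P₁ l₀ y * klFun (mixture P₀ P₁ l y / mixture P₀ P₁ l₀ y) :=
  funext fun l => discreteKL_eq_sum_klFun (fun y => (hpos y).ne')
    (by rw [mixture.sum_eq hsum, mixture.sum_eq hsum])

lemma isMinOn_sum_mul_klFun_mixture (hP₀ : ∀ y, 0 ≤ P₀ y) (hP₁ : ∀ y, 0 ≤ P₁ y)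
    (hpos : ∀ y, 0 < mixture P₀ P₁ l₀ y) :
    IsMinOn (fun l => ∑ y, mixture P₀ P₁ l₀ y * klFun (mixture P₀ P₁ l y / mixture P₀ P₁ l₀ y))
      (Icc 0 1) l₀ := fun l hl => by
  simp only [div_self (hpos _).ne', klFun_one, mul_zero, Finset.sum_const_zero]
  exact Finset.sum_nonneg fun y _ => mul_nonneg (hpos y).le
    (klFun_nonneg (div_nonneg (mixture.nonneg hP₀ hP₁ hl y) (hpos y).le))

theorem monotoneOn_discreteKL_mixture (hP₀ : ∀ y, 0 ≤ P₀ y) (hP₁ : ∀ y, 0 ≤ P₁ y)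
    (hsum : ∑ y, P₀ y = ∑ y, P₁ y) (hl₀ : l₀ ∈ Icc 0 1) (hpos : ∀ y, 0 < mixture P₀ P₁ l₀ y) :
    MonotoneOn (fun l => discreteKL (mixture P₀ P₁ l) (mixture P₀ P₁ l₀)) (Icc l₀ 1) := by
  rw [discreteKL_mixture_eq_sum_klFun hsum hpos]
  refine ((convexOn_sum_mul_klFun_mixture hP₀ hP₁ fun y => (hpos y).le).monotoneOn_of_isMinOn
    hl₀ (isMinOn_sum_mul_klFun_mixture hP₀ hP₁ hpos)).mono ?_
  exact fun l hl => ⟨⟨hl₀.1.trans hl.1, hl.2⟩, hl.1⟩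

theorem strictMonoOn_discreteKL_mixture (hP₀ : ∀ y, 0 ≤ P₀ y) (hP₁ : ∀ y, 0 ≤ P₁ y)
    (hne : P₀ ≠ P₁) (hsum : ∑ y, P₀ y = ∑ y, P₁ y) (hl₀ : l₀ ∈ Icc 0 1)
    (hpos : ∀ y, 0 < mixture P₀ P₁ l₀ y) :
    StrictMonoOn (fun l => discreteKL (mixture P₀ P₁ l) (mixture P₀ P₁ l₀)) (Icc l₀ 1) := by
  rw [discreteKL_mixture_eq_sum_klFun hsum hpos]
  refine ((strictConvexOn_sum_mul_klFun_mixture hP₀ hP₁ hne hpos).strictMonoOn_of_isMinOn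
    hl₀ (isMinOn_sum_mul_klFun_mixture hP₀ hP₁ hpos)).mono ?_
  exact fun l hl => ⟨⟨hl₀.1.trans hl.1, hl.2⟩, hl.1⟩

end Mixture

lemma bernKL_eq_discreteKL_mixture (q p : ℝ) :
    bernKL q p = discreteKL (mixture (Pi.single false 1) (Pi.single true 1) q)
      (mixture (Pi.single false 1) (Pi.single true 1) p) := by
  simp [bernKL, discreteKL, mixture]

theorem strictMonoOn_bernKL {p : ℝ} (hp : p ∈ Ioo 0 1) :
    StrictMonoOn (bernKL · p) (Icc p 1) := by
  simp_rw [bernKL_eq_discreteKL_mixture]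
  have hδ : ∀ b, (0 : Bool → ℝ) ≤ Pi.single b 1 := fun b => Pi.single_nonneg.2 zero_le_one
  refine strictMonoOn_discreteKL_mixture (hδ false) (hδ true) (fun h => ?_) (by simp)
    (Ioo_subset_Icc_self hp) fun b => ?_
  · simpa using congr_fun h true
  · cases b <;> simp [mixture, hp.1, hp.2]

theorem end_to_end_selection_general {C Y : Type*} [Fintype Y]
    (Chat : Finset C)
    (p : C → ℝ) (pbar : ℝ) (hpbar : pbar ∈ Set.Ioo (0:ℝ) 1)
    (hp : ∀ c ∈ Chat, p c ∈ Set.Ico pbar 1)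
    (lam : C → ℝ) (lbar : ℝ) (hlbar : lbar ∈ Set.Icc (0:ℝ) 1)
    (hlam : ∀ c ∈ Chat, lam c ∈ Set.Icc lbar 1)
    (hmono : ∀ c₁ ∈ Chat, ∀ c₂ ∈ Chat, p c₁ ≥ p c₂ → lam c₁ ≥ lam c₂)
    (P0 P1 : Y → ℝ)
    (hP00 : ∀ y, 0 ≤ P0 y) (hP01 : ∑ y, P0 y = 1)
    (hP10 : ∀ y, 0 ≤ P1 y) (hP11 : ∑ y, P1 y = 1)
    (hpos : ∀ y, 0 < (1 - lbar) * P0 y + lbar * P1 y)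
    (cstar : C) (hcstar : cstar ∈ Chat)
    (hmax : ∀ c ∈ Chat, bernKL (p c) pbar ≤ bernKL (p cstar) pbar) :
    ∀ c ∈ Chat,
      ∑ y, ((1 - lam c) * P0 y + lam c * P1 y) *
          Real.log (((1 - lam c) * P0 y + lam c * P1 y) /
            ((1 - lbar) * P0 y + lbar * P1 y))
        ≤ ∑ y, ((1 - lam cstar) * P0 y + lam cstar * P1 y) *
          Real.log (((1 - lam cstar) * P0 y + lam cstar * P1 y) /
            ((1 - lbar) * P0 y + lbar * P1 y)) := by
  intro c hc
  have hp_le : p c ≤ p cstar := by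
    by_contra! hlt
    exact (hmax c hc).not_gt <| strictMonoOn_bernKL hpbar (Ico_subset_Icc_self (hp cstar hcstar))
      (Ico_subset_Icc_self (hp c hc)) hlt
  exact monotoneOn_discreteKL_mixture hP00 hP10 (hP01.trans hP11.symm) hlbar hpos (hlam c hc)
    (hlam cstar hcstar) (hmono cstar hcstar c hc hp_le)

/-- End-to-end selection theorem: under the monotone linkage between helpfulness
probabilities `p : Ĉ → [p̄,1)` and mixture weights `λ : Ĉ → [λ̄,1]`, any maximizer of the
latent information gain `D_KL(Bern(p ·) ‖ Bern(p̄))` over `Ĉ` is also a maximizer of the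
answer-space utility `U(c) = D_KL(P_{λ(c)} ‖ P_{λ̄})` over `Ĉ`. -/
theorem end_to_end_selection {C Y : Type*} [Fintype C] [Fintype Y]
    (Chat : Finset C) (hne : Chat.Nonempty)
    (p : C → ℝ) (pbar : ℝ) (hpbar : pbar ∈ Set.Ioo (0:ℝ) 1)
    (hp : ∀ c ∈ Chat, p c ∈ Set.Ico pbar 1)
    (lam : C → ℝ) (lbar : ℝ) (hlbar : lbar ∈ Set.Icc (0:ℝ) 1)
    (hlam : ∀ c ∈ Chat, lam c ∈ Set.Icc lbar 1)
    (hmono : ∀ c₁ ∈ Chat, ∀ c₂ ∈ Chat, p c₁ ≥ p c₂ → lam c₁ ≥ lam c₂)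
    (P0 P1 : Y → ℝ)
    (hP00 : ∀ y, 0 ≤ P0 y) (hP01 : ∑ y, P0 y = 1)
    (hP10 : ∀ y, 0 ≤ P1 y) (hP11 : ∑ y, P1 y = 1)
    (hpos : ∀ y, 0 < (1 - lbar) * P0 y + lbar * P1 y)
    (cstar : C) (hcstar : cstar ∈ Chat)
    (hmax : ∀ c ∈ Chat, bernKL (p c) pbar ≤ bernKL (p cstar) pbar) :
    ∀ c ∈ Chat,
      ∑ y, ((1 - lam c) * P0 y + lam c * P1 y) *
          Real.log (((1 - lam c) * P0 y + lam c * P1 y) /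
            ((1 - lbar) * P0 y + lbar * P1 y))
        ≤ ∑ y, ((1 - lam cstar) * P0 y + lam cstar * P1 y) *
          Real.log (((1 - lam cstar) * P0 y + lam cstar * P1 y) /
            ((1 - lbar) * P0 y + lbar * P1 y)) :=
  end_to_end_selection_general Chat p pbar hpbar hp lam lbar hlbar hlam hmono P0 P1 hP00 hP01 hP10
    hP11 hpos cstar hcstar hmax
end
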